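/- Let f : I ⊆ (0,∞) → (0,∞) be differentiable on I°, let a, b ∈ I° with a < b, f' integrable on [a,b], and suppose |f'|^q is s-geometrically convex on [a,b] for some q > 1 and s ∈ (0,1]. If |f'(a)| ≤ 1 ≤ |f'(b)|, then |(f(a)+f(b))/2 − (1/(ln b − ln a)) ∫_a^b f(x)/x dx| ≤ (1/2) ln(b/a) · ((q−1)/(2q−1))^{1−1/q} · [ a|f'(a)|^s |f'(b)|^{1−s} g₂(θ₁)^{1/q} + b|f'(b)| g₂(θ₂)^{1/q} ]. -/

import Mathlib

open Real MeasureTheory Set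

/-- `g` is `s`-geometrically convex on `J`. -/
def SGeometricallyConvexOn (s : ℝ) (J : Set ℝ) (g : ℝ → ℝ) : Prop :=
  ∀ x ∈ J, ∀ y ∈ J, ∀ t ∈ Set.Icc (0:ℝ) 1,
    g (x ^ t * y ^ (1 - t)) ≤ g x ^ t ^ s * g y ^ (1 - t) ^ s

noncomputable def g₁ (u : ℝ) : ℝ :=
  if u = 1 then 1/2 else (u * Real.log u - u + 1) / (Real.log u) ^ 2

noncomputable def g₂ (u : ℝ) : ℝ :=
  if u = 1 then 1 else (u - 1) / Real.log u

/-!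
Integrating `f x / x` by parts against `log x - (log a + log b) / 2`, whose modulus is at most
`log (b / a) / 2` on `[a, b]`, bounds the left-hand side by `(1 / 2) ∫ₐᵇ |f'|`. After the
substitution `x = a (b / a) ^ t`, s-geometric convexity and `|f' a| ≤ 1 ≤ |f' b|` give
`x |f' x| ≤ |f' b| ^ (1 - s) (a |f' a| ^ s) ^ (1 - t) (b |f' b| ^ s) ^ t`, and Jensen's
inequality for `u ↦ u ^ (1 / q)` turns `∫₀¹ r ^ t dt = g₂ r` into `g₂ (r ^ q) ^ (1 / q)`.
The two terms on the right-hand side are equal, since `x g₂ ((y / x) ^ q) ^ (1 / q)` is the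
`q`-th root of the logarithmic mean of `x ^ q` and `y ^ q`, and the constant
`((q - 1) / (2q - 1)) ^ (1 - 1 / q)` is at least `1 / 2`.
-/

lemma g₂_nonneg {u : ℝ} (hu : 0 ≤ u) : 0 ≤ g₂ u := by
  unfold g₂
  split_ifs with h1
  · exact zero_le_one
  rcases lt_or_gt_of_ne h1 with h | h
  · exact div_nonneg_of_nonpos (by linarith) (log_nonpos hu h.le)
  · exact div_nonneg (by linarith) (log_nonneg h.le)

lemma g₂_inv {u : ℝ} (hu : 0 < u) : g₂ u⁻¹ = g₂ u / u := by
  unfold g₂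
  rcases eq_or_ne u 1 with rfl | h1
  · simp
  have hlog : log u ≠ 0 := log_ne_zero_of_pos_of_ne_one hu h1
  rw [if_neg (inv_ne_one.mpr h1), if_neg h1, log_inv]
  field_simp
  ring

lemma mul_g₂_rpow_div_comm {x y q : ℝ} (hx : 0 ≤ x) (hy : 0 ≤ y) (hq : 0 < q) :
    x * g₂ ((y / x) ^ q) ^ (1 / q) = y * g₂ ((x / y) ^ q) ^ (1 / q) := by
  have hg₂0 : g₂ 0 = 0 := by simp [g₂]
  rcases hx.eq_or_lt with rfl | hx
  · simp [zero_rpow hq.ne', hg₂0, zero_rpow (inv_ne_zero hq.ne')]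
  rcases hy.eq_or_lt with rfl | hy
  · simp [zero_rpow hq.ne', hg₂0, zero_rpow (inv_ne_zero hq.ne')]
  have hθ : 0 < (y / x) ^ q := by positivity
  rw [← inv_div y x, inv_rpow (by positivity), g₂_inv hθ, div_rpow (g₂_nonneg hθ.le) hθ.le,
    ← rpow_mul (by positivity), mul_one_div_cancel hq.ne', rpow_one]
  field_simp

lemma integral_rpow_eq_g₂ {r : ℝ} (hr : 0 < r) : ∫ t in (0:ℝ)..1, r ^ t = g₂ r := by
  unfold g₂
  split_ifs with h1
  · simp [h1]
  have hlog : log r ≠ 0 := log_ne_zero_of_pos_of_ne_one hr h1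
  simp_rw [rpow_def_of_pos hr]
  rw [intervalIntegral.integral_comp_mul_left (fun t => exp t) hlog]
  simp [integral_exp, exp_log hr]
  field_simp

lemma integral_rpow_le_rpow_integral {φ : ℝ → ℝ} {p : ℝ} (hφ : Continuous φ)
    (hφ0 : ∀ t, 0 ≤ φ t) (hp0 : 0 ≤ p) (hp1 : p ≤ 1) :
    ∫ t in (0:ℝ)..1, φ t ^ p ≤ (∫ t in (0:ℝ)..1, φ t) ^ p := by
  have : IsProbabilityMeasure (volume.restrict (Ioc (0:ℝ) 1)) := ⟨by simp⟩
  simp only [intervalIntegral.integral_of_le zero_le_one]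
  exact (concaveOn_rpow hp0 hp1).le_map_integral (continuous_rpow_const hp0).continuousOn
    isClosed_Ici (ae_of_all _ hφ0) hφ.integrableOn_Ioc
    ((continuous_rpow_const hp0).comp hφ).integrableOn_Ioc

lemma integral_rpow_le_g₂_rpow {r q : ℝ} (hr : 0 < r) (hq : 1 ≤ q) :
    ∫ t in (0:ℝ)..1, r ^ t ≤ g₂ (r ^ q) ^ (1 / q) := by
  have hq0 : 0 < q := by linarith
  rw [← integral_rpow_eq_g₂ (by positivity)]
  calc ∫ t in (0:ℝ)..1, r ^ t = ∫ t in (0:ℝ)..1, ((r ^ q) ^ t) ^ (1 / q) := by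
        congr 1 with t
        rw [← rpow_mul hr.le, ← rpow_mul hr.le]
        field_simp
    _ ≤ _ := integral_rpow_le_rpow_integral
        (continuous_const.rpow continuous_id fun _ => Or.inl (by positivity))
        (fun t => by positivity) (by positivity) ((div_le_one hq0).mpr hq)

lemma one_half_le_rpow_sub_one_div {q : ℝ} (hq : 1 < q) :
    1 / 2 ≤ ((q - 1) / (2 * q - 1)) ^ (1 - 1 / q) := by
  -- with `p = 1 - 1 / q` this is Bernoulli's inequality `(1 + 1 / p) ^ p ≤ 1 + p * (1 / p)`
  set p := 1 - 1 / q with hp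
  have hp0 : 0 < p := by rw [hp, sub_pos, div_lt_one (by linarith)]; exact hq
  have hp1 : p ≤ 1 := by linarith [one_div_pos.mpr (by linarith : (0:ℝ) < q)]
  have hbern : (1 + 1 / p) ^ p ≤ 2 := by
    have := rpow_one_add_le_one_add_mul_self (s := 1 / p) (by linarith [one_div_pos.mpr hp0])
      hp0.le hp1
    rwa [mul_one_div_cancel hp0.ne', one_add_one_eq_two] at this
  have hratio : (q - 1) / (2 * q - 1) = (1 + 1 / p)⁻¹ := by
    rw [hp]
    have : q - 1 ≠ 0 := by linarith
    have : 2 * q - 1 ≠ 0 := by linarith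
    field_simp
    ring
  rw [hratio, inv_rpow (by positivity), one_div]
  exact inv_anti₀ (by positivity) hbern

noncomputable def geomPath (a b t : ℝ) : ℝ := a * (b / a) ^ t

section geomPath

variable {a b : ℝ}

lemma geomPath_eq_rpow_mul_rpow (ha : 0 < a) (hb : 0 < b) (t : ℝ) :
    geomPath a b t = b ^ t * a ^ (1 - t) := by
  rw [geomPath, div_rpow hb.le ha.le, rpow_sub ha, rpow_one]
  field_simp

lemma geomPath_pos (ha : 0 < a) (hb : 0 < b) (t : ℝ) : 0 < geomPath a b t := by
  unfold geomPath
  positivity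

lemma geomPath_mem_Icc (ha : 0 < a) (hab : a ≤ b) {t : ℝ} (ht : t ∈ Icc (0:ℝ) 1) :
    geomPath a b t ∈ Icc a b := by
  have hba : 1 ≤ b / a := (one_le_div ha).mpr hab
  constructor
  · exact le_mul_of_one_le_right ha.le (one_le_rpow hba ht.1)
  · calc a * (b / a) ^ t ≤ a * (b / a) ^ (1:ℝ) := by gcongr; exact ht.2
      _ = b := by rw [rpow_one]; field_simp

lemma hasDerivAt_geomPath (ha : 0 < a) (hb : 0 < b) (t : ℝ) :
    HasDerivAt (geomPath a b) (log (b / a) * geomPath a b t) t := by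
  rw [show log (b / a) * geomPath a b t = a * ((b / a) ^ t * log (b / a)) by
    rw [geomPath]; ring]
  exact (hasStrictDerivAt_const_rpow (div_pos hb ha) t).hasDerivAt.const_mul a

lemma integral_eq_log_div_mul_integral_geomPath (ha : 0 < a) (hab : a ≤ b) (g : ℝ → ℝ) :
    ∫ x in a..b, g x = log (b / a) * ∫ t in (0:ℝ)..1, geomPath a b t * g (geomPath a b t) := by
  have hb : 0 < b := ha.trans_le hab
  have hvar := integral_Icc_deriv_smul_of_deriv_nonneg (g := g)
    (fun t _ => (hasDerivAt_geomPath ha hb t).continuousAt.continuousWithinAt)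
    (fun t _ => hasDerivAt_geomPath ha hb t)
    (fun t _ => mul_nonneg (log_nonneg ((one_le_div ha).mpr hab))
      (mul_nonneg ha.le (rpow_nonneg (by positivity) t))) zero_le_one
  have h0 : geomPath a b 0 = a := by simp [geomPath]
  have h1 : geomPath a b 1 = b := by simp [geomPath]; field_simp
  rw [h0, h1] at hvar
  rw [intervalIntegral.integral_of_le hab, intervalIntegral.integral_of_le zero_le_one,
    ← integral_Icc_eq_integral_Ioc, ← integral_Icc_eq_integral_Ioc, ← hvar,
    ← integral_const_mul]
  simp only [smul_eq_mul, mul_assoc]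

end geomPath

theorem SGeometricallyConvexOn.of_rpow {s q : ℝ} {J : Set ℝ} {h : ℝ → ℝ} (hq : 0 < q)
    (hh : ∀ x ∈ J, 0 ≤ h x) (hconv : SGeometricallyConvexOn s J (fun x => h x ^ q)) :
    SGeometricallyConvexOn s J h := by
  intro x hx y hy t ht
  have hbound : 0 ≤ h x ^ t ^ s * h y ^ (1 - t) ^ s :=
    mul_nonneg (rpow_nonneg (hh x hx) _) (rpow_nonneg (hh y hy) _)
  rcases le_or_gt (h (x ^ t * y ^ (1 - t))) 0 with hneg | hpos
  · exact hneg.trans hbound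
  have hle := hconv x hx y hy t ht
  simp only at hle
  rw [← rpow_mul (hh x hx), ← rpow_mul (hh y hy), mul_comm q, mul_comm q,
    rpow_mul (hh x hx), rpow_mul (hh y hy), ← mul_rpow (rpow_nonneg (hh x hx) _)
    (rpow_nonneg (hh y hy) _)] at hle
  exact (rpow_le_rpow_iff hpos.le hbound hq).mp hle

lemma rpow_rpow_mul_rpow_rpow_le {A B s t : ℝ} (hA0 : 0 ≤ A) (hA1 : A ≤ 1) (hB : 1 ≤ B)
    (hs : s ∈ Ioc (0:ℝ) 1) (ht : t ∈ Icc (0:ℝ) 1) :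
    B ^ t ^ s * A ^ (1 - t) ^ s ≤ B ^ (1 - s) * (B ^ s) ^ t * (A ^ s) ^ (1 - t) := by
  obtain ⟨hs0, hs1⟩ := hs
  obtain ⟨ht0, ht1⟩ := ht
  have hB0 : 0 < B := zero_lt_one.trans_le hB
  rw [← rpow_mul hB0.le, ← rpow_mul hA0, ← rpow_add hB0]
  refine mul_le_mul (rpow_le_rpow_of_exponent_le hB ?_)
    (rpow_le_rpow_of_exponent_ge' hA0 hA1 (by nlinarith) ?_) (rpow_nonneg hA0 _)
    (rpow_nonneg hB0.le _)
  · have := geom_mean_le_arith_mean2_weighted hs0.le (sub_nonneg.mpr hs1) ht0 zero_le_one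
      (add_sub_cancel s 1)
    rw [one_rpow, mul_one, mul_one] at this
    linarith
  · calc s * (1 - t) ≤ 1 - t := by nlinarith
      _ = (1 - t) ^ (1:ℝ) := (rpow_one _).symm
      _ ≤ (1 - t) ^ s := rpow_le_rpow_of_exponent_ge' (by linarith) (by linarith) hs0.le hs1

lemma geomPath_mul_le_of_sGeometricallyConvexOn {h : ℝ → ℝ} {a b q s t : ℝ} (ha : 0 < a)
    (hab : a ≤ b) (hq : 0 < q) (hs : s ∈ Ioc (0:ℝ) 1)
    (hconv : SGeometricallyConvexOn s (Icc a b) (fun x => |h x| ^ q))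
    (hha : |h a| ≤ 1) (hhb : 1 ≤ |h b|) (ht : t ∈ Icc (0:ℝ) 1) :
    geomPath a b t * |h (geomPath a b t)| ≤
      |h b| ^ (1 - s) * (a * |h a| ^ s) ^ (1 - t) * (b * |h b| ^ s) ^ t := by
  have hb : 0 < b := ha.trans_le hab
  have hpt :=
    (hconv.of_rpow hq fun x _ => abs_nonneg (h x)) b ⟨hab, le_rfl⟩ a ⟨le_rfl, hab⟩ t ht
  rw [← geomPath_eq_rpow_mul_rpow ha hb] at hpt
  calc geomPath a b t * |h (geomPath a b t)|
      ≤ b ^ t * a ^ (1 - t) * (|h b| ^ (1 - s) * (|h b| ^ s) ^ t * (|h a| ^ s) ^ (1 - t)) := by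
        rw [← geomPath_eq_rpow_mul_rpow ha hb]
        gcongr
        · exact (geomPath_pos ha hb t).le
        · exact hpt.trans (rpow_rpow_mul_rpow_rpow_le (abs_nonneg _) hha hhb hs ht)
    _ = _ := by
        rw [mul_rpow ha.le (by positivity), mul_rpow hb.le (by positivity)]
        ring

lemma integral_abs_le_of_sGeometricallyConvexOn {h : ℝ → ℝ} {a b q s : ℝ} (ha : 0 < a)
    (hab : a ≤ b) (hq : 1 ≤ q) (hs : s ∈ Ioc (0:ℝ) 1)
    (hconv : SGeometricallyConvexOn s (Icc a b) (fun x => |h x| ^ q))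
    (hha : |h a| ≤ 1) (hhb : 1 ≤ |h b|) :
    ∫ x in a..b, |h x| ≤ log (b / a) *
      (a * |h a| ^ s * |h b| ^ (1 - s) * g₂ ((b * |h b| ^ s / (a * |h a| ^ s)) ^ q) ^ (1 / q)) := by
  have hb : 0 < b := ha.trans_le hab
  have hpath (t : ℝ) (ht : t ∈ Icc (0:ℝ) 1) :=
    geomPath_mul_le_of_sGeometricallyConvexOn ha hab (by linarith) hs hconv hha hhb ht
  rw [integral_eq_log_div_mul_integral_geomPath ha hab]
  refine mul_le_mul_of_nonneg_left ?_ (log_nonneg ((one_le_div ha).mpr hab))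
  rcases (abs_nonneg (h a)).eq_or_lt with hA | hA
  · -- `|h a| = 0` forces `h` to vanish on `[a, b)`
    rw [← hA, zero_rpow hs.1.ne', mul_zero, zero_mul, zero_mul,
      intervalIntegral.integral_of_le zero_le_one, integral_Ioc_eq_integral_Ioo]
    refine setIntegral_nonpos measurableSet_Ioo fun t ht =>
      (hpath t (Ioo_subset_Icc_self ht)).trans ?_
    rw [← hA, zero_rpow hs.1.ne', mul_zero, zero_rpow (sub_ne_zero.mpr ht.2.ne'), mul_zero,
      zero_mul]
  set x := a * |h a| ^ s
  set y := b * |h b| ^ s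
  have hx : 0 < x := by positivity
  calc ∫ t in (0:ℝ)..1, geomPath a b t * |h (geomPath a b t)|
      ≤ ∫ t in (0:ℝ)..1, |h b| ^ (1 - s) * x * (y / x) ^ t := by
        simp only [intervalIntegral.integral_of_le zero_le_one]
        refine integral_mono_of_nonneg (ae_of_all _ fun t => ?_) (Continuous.integrableOn_Ioc ?_) ?_
        · exact mul_nonneg (geomPath_pos ha hb t).le (abs_nonneg _)
        · exact continuous_const.mul
            (continuous_const.rpow continuous_id fun _ => Or.inl (by positivity))
        · filter_upwards [ae_restrict_mem measurableSet_Ioc] with t ht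
          refine (hpath t ⟨ht.1.le, ht.2⟩).trans_eq ?_
          rw [rpow_sub hx, rpow_one, div_rpow (by positivity) hx.le]
          field_simp
    _ = |h b| ^ (1 - s) * x * ∫ t in (0:ℝ)..1, (y / x) ^ t :=
        intervalIntegral.integral_const_mul _ _
    _ ≤ |h b| ^ (1 - s) * x * g₂ ((y / x) ^ q) ^ (1 / q) := by
        gcongr
        exact integral_rpow_le_g₂_rpow (by positivity) hq
    _ = _ := by ring

section trapezoid

variable {f f' : ℝ → ℝ} {a b : ℝ}

lemma trapezoid_sub_integral_div_eq (ha : 0 < a) (hab : a < b)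
    (hf : ∀ x ∈ uIcc a b, HasDerivAt f (f' x) x) (hf' : IntervalIntegrable f' volume a b) :
    (f a + f b) / 2 - 1 / (log b - log a) * ∫ x in a..b, f x / x =
      1 / (log b - log a) * ∫ x in a..b, f' x * (log x - (log a + log b) / 2) := by
  have hL : log b - log a ≠ 0 := (sub_pos.mpr (log_lt_log ha hab)).ne'
  have hpos : ∀ x ∈ uIcc a b, 0 < x := fun x hx => ha.trans_le (by simpa [hab.le] using hx.1)
  have hibp := intervalIntegral.integral_mul_deriv_eq_deriv_mul hf
    (fun x hx => (hasDerivAt_log (hpos x hx).ne').sub_const ((log a + log b) / 2)) hf'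
    (ContinuousOn.intervalIntegrable (continuousOn_inv₀.mono fun x hx => (hpos x hx).ne'))
  simp only [← div_eq_mul_inv] at hibp
  rw [hibp]
  field_simp
  ring

lemma abs_trapezoid_sub_integral_div_le (ha : 0 < a) (hab : a < b)
    (hf : ∀ x ∈ uIcc a b, HasDerivAt f (f' x) x) (hf' : IntervalIntegrable f' volume a b) :
    |(f a + f b) / 2 - 1 / (log b - log a) * ∫ x in a..b, f x / x| ≤
      1 / 2 * ∫ x in a..b, |f' x| := by
  have hL : 0 < log b - log a := sub_pos.mpr (log_lt_log ha hab)
  have hlog : ∀ x ∈ Icc a b, |log x - (log a + log b) / 2| ≤ (log b - log a) / 2 := by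
    intro x hx
    have h1 := log_le_log ha hx.1
    have h2 := log_le_log (ha.trans_le hx.1) hx.2
    rw [abs_le]
    constructor <;> linarith
  rw [trapezoid_sub_integral_div_eq ha hab hf hf', abs_mul, abs_of_pos (by positivity)]
  calc 1 / (log b - log a) * |∫ x in a..b, f' x * (log x - (log a + log b) / 2)|
      ≤ 1 / (log b - log a) * ∫ x in a..b, (log b - log a) / 2 * |f' x| := by
        gcongr
        refine (intervalIntegral.abs_integral_le_integral_abs hab.le).trans
          (intervalIntegral.integral_mono_on hab.le ?_ (hf'.abs.const_mul _) fun x hx => ?_)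
        · exact (hf'.mul_continuousOn ((continuousOn_log.mono fun x hx =>
            (ha.trans_le (by simpa [hab.le] using hx.1)).ne').sub continuousOn_const)).abs
        · rw [abs_mul, mul_comm]
          exact mul_le_mul_of_nonneg_right (hlog x hx) (abs_nonneg _)
    _ = 1 / 2 * ∫ x in a..b, |f' x| := by
        rw [intervalIntegral.integral_const_mul]
        field_simp

end trapezoid

theorem stmt_12_general
    (I : Set ℝ) (hI : I.OrdConnected) (hIpos : I ⊆ Set.Ioi (0:ℝ))
    (f f' : ℝ → ℝ)
    (a b : ℝ) (ha : a ∈ interior I) (hb : b ∈ interior I) (hab : a < b)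
    (hdiff : ∀ x ∈ interior I, HasDerivAt f (f' x) x)
    (hint : IntervalIntegrable f' volume a b)
    (q s : ℝ) (hq : 1 < q) (hs : s ∈ Set.Ioc (0:ℝ) 1)
    (hconv : SGeometricallyConvexOn s (Set.Icc a b) (fun x => |f' x| ^ q))
    (hfa : |f' a| ≤ 1) (hfb : 1 ≤ |f' b|) :
    |(f a + f b) / 2 - (1 / (Real.log b - Real.log a)) * ∫ x in a..b, f x / x| ≤
      (1 / 2 : ℝ) * Real.log (b / a) * ((q - 1) / (2 * q - 1)) ^ (1 - 1 / q) *
        (a * |f' a| ^ s * |f' b| ^ (1 - s) * (g₂ ((b * |f' b| ^ s / (a * |f' a| ^ s)) ^ (q))) ^ (1 / q)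
         + b * |f' b| * (g₂ ((a * |f' a| ^ s / (b * |f' b| ^ s)) ^ (q))) ^ (1 / q)) := by
  have ha0 : 0 < a := hIpos (interior_subset ha)
  have hb0 : 0 < b := ha0.trans hab
  have hB : 0 < |f' b| := zero_lt_one.trans_le hfb
  have hderiv : ∀ x ∈ uIcc a b, HasDerivAt f (f' x) x := fun x hx =>
    hdiff x (hI.interior.out ha hb (by rwa [uIcc_of_le hab.le] at hx))
  set T :=
    a * |f' a| ^ s * |f' b| ^ (1 - s) * g₂ ((b * |f' b| ^ s / (a * |f' a| ^ s)) ^ q) ^ (1 / q)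
  have hT : b * |f' b| * g₂ ((a * |f' a| ^ s / (b * |f' b| ^ s)) ^ q) ^ (1 / q) = T := by
    rw [show b * |f' b| = |f' b| ^ (1 - s) * (b * |f' b| ^ s) by
        rw [mul_left_comm, ← rpow_add hB, sub_add_cancel, rpow_one],
      mul_assoc, ← mul_g₂_rpow_div_comm (by positivity) (by positivity) (by linarith)]
    ring
  have hT0 : 0 ≤ log (b / a) * T :=
    mul_nonneg (log_nonneg ((one_le_div ha0).mpr hab.le))
      (mul_nonneg (by positivity) (rpow_nonneg (g₂_nonneg (by positivity)) _))
  calc _ ≤ 1 / 2 * ∫ x in a..b, |f' x| := abs_trapezoid_sub_integral_div_le ha0 hab hderiv hint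
    _ ≤ 1 / 2 * (log (b / a) * T) := by
        gcongr
        exact integral_abs_le_of_sGeometricallyConvexOn ha0 hab.le hq.le hs hconv hfa hfb
    _ ≤ 1 / 2 * (log (b / a) * T) * (2 * ((q - 1) / (2 * q - 1)) ^ (1 - 1 / q)) :=
        le_mul_of_one_le_right (by positivity) (by linarith [one_half_le_rpow_sub_one_div hq])
    _ = _ := by rw [hT]; ring

theorem stmt_12
    (I : Set ℝ) (hI : I.OrdConnected) (hIpos : I ⊆ Set.Ioi (0:ℝ))
    (f f' : ℝ → ℝ) (hfpos : ∀ x ∈ I, 0 < f x)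
    (a b : ℝ) (ha : a ∈ interior I) (hb : b ∈ interior I) (hab : a < b)
    (hdiff : ∀ x ∈ interior I, HasDerivAt f (f' x) x)
    (hint : IntervalIntegrable f' volume a b)
    (q s : ℝ) (hq : 1 < q) (hs : s ∈ Set.Ioc (0:ℝ) 1)
    (hconv : SGeometricallyConvexOn s (Set.Icc a b) (fun x => |f' x| ^ q))
    (hfa : |f' a| ≤ 1) (hfb : 1 ≤ |f' b|) :
    |(f a + f b) / 2 - (1 / (Real.log b - Real.log a)) * ∫ x in a..b, f x / x| ≤
      (1 / 2 : ℝ) * Real.log (b / a) * ((q - 1) / (2 * q - 1)) ^ (1 - 1 / q) *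
        (a * |f' a| ^ s * |f' b| ^ (1 - s) * (g₂ ((b * |f' b| ^ s / (a * |f' a| ^ s)) ^ (q))) ^ (1 / q)
         + b * |f' b| * (g₂ ((a * |f' a| ^ s / (b * |f' b| ^ s)) ^ (q))) ^ (1 / q)) :=
  stmt_12_general I hI hIpos f f' a b ha hb hab hdiff hint q s hq hs hconv hfa hfb
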